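/- The rational function R(z,w) = (w - z²)³ / (1 + w³ - 2zw)² is a first integral of the dual billiard on the parabola {w = z²} with involutions σ_P : u ↦ -u/(1 + f(z₀)u), f(z) = 4z²/(z³ - 1): for every P = (z₀, z₀²) with z₀³ ≠ 1, R ∘ σ_P = R on the tangent line L_P. -/

import Mathlib

/-- The rational function `R(z,w) = (w - z²)³ / (1 + w³ - 2zw)²`. -/
noncomputable def Rc1 (z w : ℂ) : ℂ := (w - z ^ 2) ^ 3 / (1 + w ^ 3 - 2 * z * w) ^ 2

/-- `f(z) = 4z²/(z³ - 1)`. -/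
noncomputable def fc1 (z : ℂ) : ℂ := 4 * z ^ 2 / (z ^ 3 - 1)

/-- The dual billiard involution on the tangent line, in the coordinate `u = z - z₀`. -/
noncomputable def sigmaU (f u : ℂ) : ℂ := -u / (1 + f * u)

/-- The point of the tangent line `L_P = {w = 2z₀z - z₀²}` to the parabola `{w = z²}`
at `P = (z₀, z₀²)` with coordinate `u = z - z₀`. -/
noncomputable def linePt (z₀ u : ℂ) : ℂ × ℂ := (z₀ + u, z₀ ^ 2 + 2 * z₀ * u)

/-!
On the tangent line the numerator `w - z²` of `R` equals `-u²`, so `R = -u⁶ / Q(u)²` with `Q` the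
denominator restricted to the line. With `s = 1 + f(z₀)u` the involution is `u ↦ -u/s`, and a
direct computation gives `Q(-u/s) = Q(u)/s³`; the factors of `s` then cancel in `R`.
-/

noncomputable def tangentDen (z₀ u : ℂ) : ℂ :=
  1 + (linePt z₀ u).2 ^ 3 - 2 * (linePt z₀ u).1 * (linePt z₀ u).2

theorem Rc1_linePt (z₀ u : ℂ) :
    Rc1 (linePt z₀ u).1 (linePt z₀ u).2 = -u ^ 6 / tangentDen z₀ u ^ 2 := by
  rw [Rc1, tangentDen, linePt]
  ring

theorem one_add_fc1_mul {z₀ : ℂ} (hz1 : z₀ ^ 3 ≠ 1) (u : ℂ) :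
    1 + fc1 z₀ * u = (z₀ ^ 3 - 1 + 4 * z₀ ^ 2 * u) / (z₀ ^ 3 - 1) := by
  have hD : z₀ ^ 3 - 1 ≠ 0 := sub_ne_zero.mpr hz1
  rw [fc1]
  field_simp

theorem tangentDen_sigmaU_fc1 {z₀ u : ℂ} (hz1 : z₀ ^ 3 ≠ 1) (hu : 1 + fc1 z₀ * u ≠ 0) :
    tangentDen z₀ (sigmaU (fc1 z₀) u) = tangentDen z₀ u / (1 + fc1 z₀ * u) ^ 3 := by
  have hD : z₀ ^ 3 - 1 ≠ 0 := sub_ne_zero.mpr hz1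
  rw [one_add_fc1_mul hz1] at hu
  rw [sigmaU, one_add_fc1_mul hz1]
  -- with `D` and `E` kept atomic, `field_simp` clears the nested fraction completely
  generalize hD' : z₀ ^ 3 - 1 = D at hD hu ⊢
  generalize hE' : D + 4 * z₀ ^ 2 * u = E at hu ⊢
  have hE : E ≠ 0 := fun h => hu (by rw [h, zero_div])
  rw [tangentDen, tangentDen, linePt, linePt]
  field_simp
  subst hE' hD'
  ring

theorem neg_pow_six_div_sq_of_scale {K : Type*} [Field K] {a b s : K} (hs : s ≠ 0) :
    -(-a / s) ^ 6 / (b / s ^ 3) ^ 2 = -a ^ 6 / b ^ 2 := by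
  rcases eq_or_ne b 0 with rfl | hb
  · simp
  · field_simp

theorem Rc1_is_integral_general (z₀ : ℂ) (hz1 : z₀ ^ 3 ≠ 1) (u : ℂ)
    (hu : 1 + fc1 z₀ * u ≠ 0) :
    Rc1 (linePt z₀ (sigmaU (fc1 z₀) u)).1 (linePt z₀ (sigmaU (fc1 z₀) u)).2
      = Rc1 (linePt z₀ u).1 (linePt z₀ u).2 := by
  rw [Rc1_linePt, Rc1_linePt, tangentDen_sigmaU_fc1 hz1 hu, sigmaU]
  exact neg_pow_six_div_sq_of_scale hu

/-- the rational function `R(z,w) = (w - z²)³/(1 + w³ - 2zw)²` is a first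
integral of the dual billiard on the parabola `{w = z²}` with involutions
`σ_P : u ↦ -u/(1 + f(z₀)u)`, `f(z) = 4z²/(z³ - 1)`: for every `P = (z₀, z₀²)` with
`z₀³ ≠ 1`, one has `R ∘ σ_P = R` on the tangent line `L_P` (at every point of `L_P`
where both sides are defined). -/
theorem Rc1_is_integral (z₀ : ℂ) (hz1 : z₀ ^ 3 ≠ 1) (u : ℂ)
    (hu : 1 + fc1 z₀ * u ≠ 0)
    (hden : 1 + (linePt z₀ u).2 ^ 3 - 2 * (linePt z₀ u).1 * (linePt z₀ u).2 ≠ 0)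
    (hden' : 1 + (linePt z₀ (sigmaU (fc1 z₀) u)).2 ^ 3 -
        2 * (linePt z₀ (sigmaU (fc1 z₀) u)).1 * (linePt z₀ (sigmaU (fc1 z₀) u)).2 ≠ 0) :
    Rc1 (linePt z₀ (sigmaU (fc1 z₀) u)).1 (linePt z₀ (sigmaU (fc1 z₀) u)).2
      = Rc1 (linePt z₀ u).1 (linePt z₀ u).2 :=
  Rc1_is_integral_general z₀ hz1 u hu
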